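/- Let 0 ≤ ε < ε₀, let C_τ satisfy esssup_ω sup_x |τ_ε'(ω,x)| ≤ C_τ, and set C₁ = C_τ Σ_{j=1}^∞ λ^{−j}. Then for each n ∈ ℕ* one has ℙ-almost surely Ñ_{R_κ − C₁}(ε;ω,n) ≤ N(ε;ω,n) ≤ Ñ_{R_κ + C₁}(ε;ω,n). -/

import Mathlib

open MeasureTheory Filter Topology
open scoped ENNReal

noncomputable section

namespace RPE

variable {Ω : Type*}

/-! ## The circle and the torus -/

/-- The circle `S¹ = ℝ/ℤ`. -/
abbrev S1 := AddCircle (1 : ℝ)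

/-- The torus `𝕋² = S¹ × S¹`. -/
abbrev T2 := S1 × S1

instance : Fact ((0:ℝ) < 1) := ⟨one_pos⟩

/-- The representative in `[0,1)` of a point of the circle. -/
def lift01 (x : S1) : ℝ := (AddCircle.equivIco 1 0 x).1

/-- The circle map induced by a lift `F : ℝ → ℝ`. -/
def circMap (F : ℝ → ℝ) (x : S1) : S1 := (F (lift01 x) : ℝ)

/-- The skew product `f(x,s) = (E x mod 1, s + τ(x)/(2π) mod 1)` defined through lifts. -/
def skewMap (E τ : ℝ → ℝ) (z : T2) : T2 :=
  ((E (lift01 z.1) : ℝ), z.2 + ((τ (lift01 z.1) / (2 * Real.pi) : ℝ) : S1))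

/-- The fiber iterates `f^{(n)}(ω) = f(θ^{n-1}ω) ∘ ⋯ ∘ f(ω)` of the random skew product. -/
def iterSkew (θ : Ω → Ω) (E τ : Ω → ℝ → ℝ) : ℕ → Ω → T2 → T2
  | 0, _, z => z
  | n + 1, ω, z => iterSkew θ E τ n (θ ω) (skewMap (E ω) (τ ω) z)

/-- `C^∞` functions on the torus, via doubly periodic smooth lifts. -/
def SmoothT2 (φ : T2 → ℂ) : Prop :=
  ∃ Φ : ℝ × ℝ → ℂ, ContDiff ℝ (⊤ : ℕ∞) Φ ∧
    (∀ x s : ℝ, Φ (x + 1, s) = Φ (x, s) ∧ Φ (x, s + 1) = Φ (x, s)) ∧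
    ∀ x s : ℝ, φ ((x : S1), (s : S1)) = Φ (x, s)

/-! ## Cocycles and transfer operators (on lifts) -/

/-- Forward cocycle of (lifted) expanding maps: `E^{(n)}(ω) = E(θ^{n-1}ω) ∘ ⋯ ∘ E(ω)`. -/
def iterE (θ : Ω → Ω) (E : Ω → ℝ → ℝ) : ℕ → Ω → ℝ → ℝ
  | 0, _, x => x
  | n + 1, ω, x => iterE θ E n (θ ω) (E ω x)

/-- Birkhoff-type sum `τ^{(n)}(ω,x) = ∑_{j<n} τ(θ^jω, E^{(j)}(ω,x))`. -/
def iterTau (θ : Ω → Ω) (E τ : Ω → ℝ → ℝ) (n : ℕ) (ω : Ω) (x : ℝ) : ℝ :=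
  ∑ j ∈ Finset.range n, τ (θ^[j] ω) (iterE θ E j ω x)

/-- The composition (Koopman) operator `M_{ν,n}(ω)φ = e^{iν τ^{(n)}(ω,·)} φ ∘ E^{(n)}(ω)`. -/
def transferM (θ : Ω → Ω) (E τ : Ω → ℝ → ℝ) (ν : ℤ) (n : ℕ) (ω : Ω) (φ : ℝ → ℂ) (x : ℝ) : ℂ :=
  Complex.exp (Complex.I * ν * (iterTau θ E τ n ω x)) * φ (iterE θ E n ω x)

/-- The reduced Perron–Frobenius transfer operator
`M*_{ν,n}(ω)φ(x) = ∑_{E^{(n)}(ω,y)=x} e^{-iν τ^{(n)}(ω,y)} φ(y)/(dE^{(n)}(ω,y)/dy)`,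
realized on lifts: the preimages of `x` are `(E^{(n)}(ω))^{-1}(x+a)`, `a = 0,…,kⁿ-1`. -/
def transferStar (k : ℕ) (θ : Ω → Ω) (E τ : Ω → ℝ → ℝ) (ν : ℤ) (n : ℕ) (ω : Ω)
    (φ : ℝ → ℂ) (x : ℝ) : ℂ :=
  ∑ a ∈ Finset.range (k ^ n),
    Complex.exp (-(Complex.I * ν * iterTau θ E τ n ω (Function.invFun (iterE θ E n ω) (x + a))))
      * φ (Function.invFun (iterE θ E n ω) (x + a))
      / Complex.ofReal (deriv (iterE θ E n ω) (Function.invFun (iterE θ E n ω) (x + a)))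

/-! ## Sobolev norms via Fourier coefficients -/

/-- Fourier coefficient of a 1-periodic function, at frequency `ξ = 2πn`. -/
def fourierC (u : ℝ → ℂ) (n : ℤ) : ℂ :=
  ∫ x in (0:ℝ)..1, u x * Complex.exp (-(2 * Real.pi * n * x) * Complex.I)

/-- Squared Sobolev norm `‖u‖²_{(m)} = ∑_{ξ∈2πℤ} (1+|ξ|²)^m |û(ξ)|²`. -/
def sobNormSq (m : ℕ) (u : ℝ → ℂ) : ℝ :=
  ∑' n : ℤ, (1 + (2 * Real.pi * n) ^ 2) ^ m * ‖fourierC u n‖ ^ 2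

/-- Squared `ν`-dependent Sobolev norm `‖u‖²_{H^m_ν} = ∑_{ξ∈2πℤ} |⟨ξ/ν⟩^m û(ξ)|²`. -/
def sobNuNormSq (m : ℕ) (ν : ℤ) (u : ℝ → ℂ) : ℝ :=
  ∑' n : ℤ, (1 + (2 * Real.pi * n / ν) ^ 2) ^ m * ‖fourierC u n‖ ^ 2

/-- Smooth functions on the circle, viewed as smooth 1-periodic functions on `ℝ`. -/
def SmoothPeriodic (u : ℝ → ℂ) : Prop :=
  ContDiff ℝ (⊤ : ℕ∞) u ∧ Function.Periodic u 1

/-- Membership in `H^m(S¹)`, via summability of the Sobolev series. -/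
def sobInH (m : ℕ) (u : ℝ → ℂ) : Prop :=
  Summable fun n : ℤ => (1 + (2 * Real.pi * n) ^ 2) ^ m * ‖fourierC u n‖ ^ 2

/-- Operator norm on `H^m(S¹)` (computed over the dense subspace of smooth functions). -/
def opNormH (m : ℕ) (T : (ℝ → ℂ) → ℝ → ℂ) : ℝ :=
  ⨆ φ : {φ : ℝ → ℂ // SmoothPeriodic φ ∧ sobNormSq m φ ≤ 1}, Real.sqrt (sobNormSq m (T φ.1))

/-- Index of compactness (ball measure of noncompactness) of an operator on `H^m(S¹)`. -/
def icNormH (m : ℕ) (T : (ℝ → ℂ) → ℝ → ℂ) : ℝ :=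
  sInf {r : ℝ | 0 < r ∧ ∃ s : Finset (ℝ → ℂ), ∀ φ : ℝ → ℂ, SmoothPeriodic φ → sobNormSq m φ ≤ 1 →
    ∃ v ∈ s, Real.sqrt (sobNormSq m fun x => T φ x - v x) ≤ r}

/-! ## Canonical maps on the cotangent bundle and trajectory counts -/

/-- The canonical map `F_j : (y,η) ↦ (x_j, E'(x_j)η + τ'(x_j))`, where
`x_j = g^{-1}((y+j)/k) = E^{-1}(y+j)` on lifts. -/
def canMap (E τ : ℝ → ℝ) (j : ℕ) (p : ℝ × ℝ) : ℝ × ℝ :=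
  (Function.invFun E (p.1 + j),
    deriv E (Function.invFun E (p.1 + j)) * p.2 + deriv τ (Function.invFun E (p.1 + j)))

/-- Random trajectory branch `F_α^{(n)}(ω) = F_{α_n}(ω) ∘ F_{α_{n-1}}(θω) ∘ ⋯ ∘ F_{α_1}(θ^{n-1}ω)`. -/
def canTraj (θ : Ω → Ω) (E τ : Ω → ℝ → ℝ) : (n : ℕ) → (Fin n → ℕ) → Ω → ℝ × ℝ → ℝ × ℝ
  | 0, _, _, p => p
  | n + 1, α, ω, p =>
      canMap (E ω) (τ ω) (α (Fin.last n)) (canTraj θ E τ n (fun i => α i.castSucc) (θ ω) p)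

/-- Number of branches issued from `p` which lie in `Z = S¹ × [-R,R]` at time `n`. -/
def trajCount (k : ℕ) (θ : Ω → Ω) (E τ : Ω → ℝ → ℝ) (R : ℝ) (n : ℕ) (ω : Ω) (p : ℝ × ℝ) : ℕ :=
  Nat.card {α : Fin n → Fin k // |(canTraj θ E τ n (fun i => (α i : ℕ)) ω p).2| ≤ R}

/-- `N(ε;ω,n)`: the maximal number of non-escaping branches over starting points in `Z`. -/
def Ncount (k : ℕ) (θ : Ω → Ω) (E τ : Ω → ℝ → ℝ) (R : ℝ) (n : ℕ) (ω : Ω) : ℕ :=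
  sSup {c : ℕ | ∃ p : ℝ × ℝ, |p.2| ≤ R ∧ trajCount k θ E τ R n ω p = c}

/-- Deterministic (unperturbed) non-escaping branch count `N(0;n)`. -/
def NcountD (k : ℕ) (E₀ τ₀ : ℝ → ℝ) (R : ℝ) (n : ℕ) : ℕ :=
  Ncount k (id : Unit → Unit) (fun _ => E₀) (fun _ => τ₀) R n ()

/-- Partial captivity of the unperturbed map: `lim (1/n) log N(0;n) = 0`. -/
def PartiallyCaptive (k : ℕ) (E₀ τ₀ : ℝ → ℝ) (R : ℝ) : Prop :=
  Tendsto (fun n : ℕ => Real.log (NcountD k E₀ τ₀ R n) / n) atTop (nhds 0)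

/-! ## Lifted dynamics, the invariant section `S`, and the trapped counts `Ñ` -/

/-- Backward cocycle `G^{(n)}(ω) = G(ω) ∘ G(θω) ∘ ⋯ ∘ G(θ^{n-1}ω)`, `G(ω) = E(ω)^{-1}`. -/
def iterG (θ : Ω → Ω) (E : Ω → ℝ → ℝ) : ℕ → Ω → ℝ → ℝ
  | 0, _, x => x
  | n + 1, ω, x => Function.invFun (E ω) (iterG θ E n (θ ω) x)

/-- The lifted dynamics `F̃(ε;ω) : (y,η) ↦ (x, E'(ω,x)η + τ'(ω,x))` with `x = E(ω)^{-1}(y)`. -/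
def liftF (E τ : ℝ → ℝ) (p : ℝ × ℝ) : ℝ × ℝ :=
  (Function.invFun E p.1,
    deriv E (Function.invFun E p.1) * p.2 + deriv τ (Function.invFun E p.1))

/-- Backward cocycle `F̃^{(n)}(ε;ω) = F̃(ε;ω) ∘ F̃(ε;θω) ∘ ⋯ ∘ F̃(ε;θ^{n-1}ω)`. -/
def iterLiftF (θ : Ω → Ω) (E τ : Ω → ℝ → ℝ) : ℕ → Ω → ℝ × ℝ → ℝ × ℝ
  | 0, _, p => p
  | n + 1, ω, p => liftF (E ω) (τ ω) (iterLiftF θ E τ n (θ ω) p)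

/-- `S_ε(ω,x) = -∑_{j≥1} τ'(θ^{-j}ω, G^{(j)}(θ^{-j}ω,x)) ⋅ dG^{(j)}(θ^{-j}ω,x)/dx`. -/
def stableS (θ θinv : Ω → Ω) (E τ : Ω → ℝ → ℝ) (ω : Ω) (x : ℝ) : ℝ :=
  -∑' j : ℕ,
    deriv (τ (θinv^[j + 1] ω)) (iterG θ E (j + 1) (θinv^[j + 1] ω) x)
      * deriv (fun y => iterG θ E (j + 1) (θinv^[j + 1] ω) y) x

/-- Cardinality of `Ã_R(ε;ω,n)(y,η)`. -/
def tilACard (k : ℕ) (θ θinv : Ω → Ω) (E τ : Ω → ℝ → ℝ) (R : ℝ) (n : ℕ) (ω : Ω)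
    (p : ℝ × ℝ) : ℕ :=
  Nat.card {a : Fin (k ^ n) //
    |p.2 - stableS θ θinv E τ (θ^[n] ω) (p.1 + ((a : ℕ) : ℝ))|
      ≤ R * deriv (fun y => iterG θ E n ω y) (p.1 + ((a : ℕ) : ℝ))}

/-- `Ñ_R(ε;ω,n) = sup_{(y,η)∈ℝ²} #Ã_R(ε;ω,n)(y,η)`. -/
def tilN (k : ℕ) (θ θinv : Ω → Ω) (E τ : Ω → ℝ → ℝ) (R : ℝ) (n : ℕ) (ω : Ω) : ℕ :=
  sSup {c : ℕ | ∃ p : ℝ × ℝ, tilACard k θ θinv E τ R n ω p = c}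

/-- Deterministic (unperturbed) version `Ñ_R(0;n)`. -/
def tilND (k : ℕ) (E₀ τ₀ : ℝ → ℝ) (R : ℝ) (n : ℕ) : ℕ :=
  tilN k (id : Unit → Unit) id (fun _ => E₀) (fun _ => τ₀) R n ()

/-! ## Correlation functions -/

/-- Quenched operational correlation function
`Cor^{op}_{φ,ψ}(ω,n) = ∫ φ∘f^{(n)}(ω)·ψ̄ dxds - ∫ φ dμ_{θⁿω} ∫ ψ̄ dxds`,
where `dμ_ω = h(ω,x) dxds`. -/
def corOp (θ : Ω → Ω) (E τ : Ω → ℝ → ℝ) (h : Ω → ℝ → ℝ) (φ ψ : T2 → ℂ) (ω : Ω) (n : ℕ) : ℂ :=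
  (∫ z : T2, φ (iterSkew θ E τ n ω z) * starRingEnd ℂ (ψ z))
    - (∫ z : T2, φ z * (h (θ^[n] ω) (lift01 z.1) : ℂ)) * ∫ z : T2, starRingEnd ℂ (ψ z)

/-- Quenched classical correlation function
`Cor^{cl}_{φ,ψ}(ω,n) = ∫ φ∘f^{(n)}(ω)·ψ̄ dμ_ω - ∫ φ dμ_{θⁿω} ∫ ψ̄ dμ_ω`. -/
def corCl (θ : Ω → Ω) (E τ : Ω → ℝ → ℝ) (h : Ω → ℝ → ℝ) (φ ψ : T2 → ℂ) (ω : Ω) (n : ℕ) : ℂ :=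
  (∫ z : T2, φ (iterSkew θ E τ n ω z) * starRingEnd ℂ (ψ z) * (h ω (lift01 z.1) : ℂ))
    - (∫ z : T2, φ z * (h (θ^[n] ω) (lift01 z.1) : ℂ))
      * ∫ z : T2, starRingEnd ℂ (ψ z) * (h ω (lift01 z.1) : ℂ)

/-! ## Semiclassical pseudodifferential calculus on `S¹` -/

/-- Semiclassical (toroidal) quantization of a symbol. -/
def quantize (h : ℝ) (a : ℝ → ℝ → ℂ) (u : ℝ → ℂ) (x : ℝ) : ℂ :=
  ∑' n : ℤ, a x (h * (2 * Real.pi * n)) * fourierC u n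
    * Complex.exp ((2 * Real.pi * n * x) * Complex.I)

/-- Fourier multiplier with (real) weight `w`, semiclassical parameter `h`. -/
def multiplierOp (w : ℝ → ℝ) (h : ℝ) (u : ℝ → ℂ) (x : ℝ) : ℂ :=
  ∑' n : ℤ, (w (h * (2 * Real.pi * n)) : ℂ) * fourierC u n
    * Complex.exp ((2 * Real.pi * n * x) * Complex.I)

/-- Mixed derivative `∂_ξ^α D_x^β a` (up to a unimodular factor) of a symbol. -/
def symDeriv (a : ℝ → ℝ → ℂ) (α β : ℕ) (x ξ : ℝ) : ℂ :=
  iteratedDeriv α (fun ξ' => iteratedDeriv β (fun x' => a x' ξ') x) ξ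

/-- The symbol class `S^m(T^*(S¹))`: smooth, 1-periodic in `x`, with symbol estimates. -/
def IsSymbol (m : ℝ) (a : ℝ → ℝ → ℂ) : Prop :=
  ContDiff ℝ (⊤ : ℕ∞) (fun p : ℝ × ℝ => a p.1 p.2) ∧
  (∀ x ξ : ℝ, a (x + 1) ξ = a x ξ) ∧
  ∀ α β : ℕ, ∃ C : ℝ, ∀ x ξ : ℝ, ‖symDeriv a α β x ξ‖ ≤ C * (1 + |ξ|) ^ (m - (α : ℝ))

/-- Condition (𝒜(m)) for a family of symbols depending on `(ε, ω, n, h)`: for every `ℓ`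
there are `ε₀ > 0` (independent of `n`) and constants `C n` such that the `ℓ`-th symbol
semi-norms are a.s. bounded by `C n`, uniformly in `ε ∈ [0,ε₀)` and `0 < h ≤ 1`. -/
def CondA [MeasurableSpace Ω] (P : Measure Ω) (m : ℝ)
    (a : ℝ → Ω → ℕ → ℝ → ℝ → ℝ → ℂ) : Prop :=
  ∀ ℓ : ℕ, ∃ ε₀ : ℝ, 0 < ε₀ ∧ ∃ C : ℕ → ℝ,
    ∀ ε : ℝ, 0 ≤ ε → ε < ε₀ → ∀ n : ℕ, ∀ h : ℝ, 0 < h → h ≤ 1 →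
      ∀ᵐ ω ∂P, ∀ α β : ℕ, α + β ≤ ℓ →
        ∀ x ξ : ℝ, ‖symDeriv (a ε ω n h) α β x ξ‖ ≤ C n * (1 + |ξ|) ^ (m - (α : ℝ))

/-- Sup norm of a (complex) symbol over `T^*(S¹)`. -/
def supSym (a : ℝ → ℝ → ℂ) : ℝ := ⨆ x : ℝ, ⨆ ξ : ℝ, ‖a x ξ‖

/-- Sup norm of a real symbol over `T^*(S¹)`. -/
def supSymR (a : ℝ → ℝ → ℝ) : ℝ := ⨆ x : ℝ, ⨆ ξ : ℝ, |a x ξ|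

/-- Squared `L²(S¹)` norm. -/
def l2NormSq (u : ℝ → ℂ) : ℝ := ∫ x in (0:ℝ)..1, ‖u x‖ ^ 2

/-- `L²(S¹)` inner product. -/
def l2Inner (u v : ℝ → ℂ) : ℂ := ∫ x in (0:ℝ)..1, u x * starRingEnd ℂ (v x)

/-- The principal symbol
`p_n(ω,y,η) = ∑_α (a_m²(y,η)/a_m²(F_α^{(n)}(ω,y,η))) ⋅ dG_α^{(n)}(ω,y)/dy`. -/
def pSym (k : ℕ) (θ : Ω → Ω) (E τ : Ω → ℝ → ℝ) (am : ℝ → ℝ) (n : ℕ) (ω : Ω)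
    (y η : ℝ) : ℝ :=
  ∑ α : Fin n → Fin k,
    (am η) ^ 2 / (am (canTraj θ E τ n (fun i => (α i : ℕ)) ω (y, η)).2) ^ 2
      * deriv (fun y' => (canTraj θ E τ n (fun i => (α i : ℕ)) ω (y', η)).1) y

/-- `P_n(ω) = (Q_{ν,n}(ω))^* Q_{ν,n}(ω) = A_m M*_{ν,n}(ω) A_m^{-2} M_{ν,n}(ω) A_m`,
where `A_m = a_m(hD)` and `h = 1/ν`. -/
def Pop (k : ℕ) (θ : Ω → Ω) (E τ : Ω → ℝ → ℝ) (am : ℝ → ℝ) (ν : ℤ) (n : ℕ) (ω : Ω)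
    (u : ℝ → ℂ) : ℝ → ℂ :=
  multiplierOp am (1 / (ν : ℝ)) <|
    transferStar k θ E τ ν n ω <|
      multiplierOp (fun ξ => ((am ξ) ^ 2)⁻¹) (1 / (ν : ℝ)) <|
        transferM θ E τ ν n ω <|
          multiplierOp am (1 / (ν : ℝ)) u

/-- `Q_{ν,n}(ω) = A_m^{-1} M_{ν,n}(ω) A_m`. -/
def Qop (k : ℕ) (θ : Ω → Ω) (E τ : Ω → ℝ → ℝ) (am : ℝ → ℝ) (ν : ℤ) (n : ℕ) (ω : Ω)
    (u : ℝ → ℂ) : ℝ → ℂ :=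
  multiplierOp (fun ξ => (am ξ)⁻¹) (1 / (ν : ℝ)) <|
    transferM θ E τ ν n ω <|
      multiplierOp am (1 / (ν : ℝ)) u

/-! ## Transversality (linear base) -/

/-- Jacobian of the skew product over the linear expanding map, at a point of the circle. -/
def jac1 (k : ℕ) (τ₀ : ℝ → ℝ) (x : S1) : Matrix (Fin 2) (Fin 2) ℝ :=
  !![(k : ℝ), 0; deriv τ₀ (lift01 x) / (2 * Real.pi), 1]

/-- Jacobian `Df₀ⁿ` of the iterated skew product (it depends only on the base point). -/
def jacN (k : ℕ) (τ₀ : ℝ → ℝ) : ℕ → S1 → Matrix (Fin 2) (Fin 2) ℝ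
  | 0, _ => 1
  | n + 1, x => jacN k τ₀ n (circMap (fun t => (k : ℝ) * t) x) * jac1 k τ₀ x

/-- A `2×2` matrix acting on `ℝ²`. -/
def mulVec2 (M : Matrix (Fin 2) (Fin 2) ℝ) (p : ℝ × ℝ) : ℝ × ℝ :=
  (M 0 0 * p.1 + M 0 1 * p.2, M 1 0 * p.1 + M 1 1 * p.2)

/-- The cone `𝒦_t = {(ξ,η) : |η| ≤ t|ξ|}`. -/
def cone (t : ℝ) : Set (ℝ × ℝ) := {p | |p.2| ≤ t * |p.1|}

/-- Transversality `ζ ⋔ w`: the images of the cone `𝒦_R` (with `ϑ_R = R/(λ₀-1)`, `λ₀ = k`)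
under `Df₀ⁿ(ζ)` and `Df₀ⁿ(w)` meet only at `0`. -/
def Transversal (k : ℕ) (τ₀ : ℝ → ℝ) (R : ℝ) (n : ℕ) (ζ w : T2) : Prop :=
  mulVec2 (jacN k τ₀ n ζ.1) '' cone (R / ((k : ℝ) - 1)) ∩
    mulVec2 (jacN k τ₀ n w.1) '' cone (R / ((k : ℝ) - 1)) ⊆ {((0:ℝ), (0:ℝ))}

/-- The skew product with linear base `f₀(x,s) = (kx mod 1, s + τ₀(x)/(2π) mod 1)`. -/
def skewD (k : ℕ) (τ₀ : ℝ → ℝ) : T2 → T2 := skewMap (fun x => (k : ℝ) * x) τ₀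

/-- `#{w ∈ f₀^{-n}(z) : w not transversal to ζ}`. -/
def notTransCount (k : ℕ) (τ₀ : ℝ → ℝ) (R : ℝ) (n : ℕ) (z ζ : T2) : ℕ :=
  Nat.card {w : T2 // (skewD k τ₀)^[n] w = z ∧ ¬ Transversal k τ₀ R n ζ w}

/-- `kⁿ φ_R(n) = sup_z sup_{ζ∈f₀^{-n}(z)} #{w ∈ f₀^{-n}(z) : w ⋔̸ ζ}`. -/
def phiCount (k : ℕ) (τ₀ : ℝ → ℝ) (R : ℝ) (n : ℕ) : ℕ :=
  sSup {c : ℕ | ∃ z ζ : T2, (skewD k τ₀)^[n] ζ = z ∧ notTransCount k τ₀ R n z ζ = c}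

/-- `φ_R(n) = k^{-n} sup_z sup_{ζ∈f₀^{-n}(z)} #{w ∈ f₀^{-n}(z) : w ⋔̸ ζ}`. -/
def phiR (k : ℕ) (τ₀ : ℝ → ℝ) (R : ℝ) (n : ℕ) : ℝ :=
  (phiCount k τ₀ R n : ℝ) / (k : ℝ) ^ n

/-! ## The spaces `C^m(S¹)` -/

/-- The space `C^m(S¹)` of `C^m` (`m ≤ ∞`) 1-periodic real functions. -/
def CmSpace (m : ℕ∞) : Type := {τ : ℝ → ℝ // ContDiff ℝ m τ ∧ Function.Periodic τ 1}

/-- The `C^m` topology: uniform convergence of all derivatives of order `≤ m`. -/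
instance (m : ℕ∞) : TopologicalSpace (CmSpace m) :=
  TopologicalSpace.induced
    (fun τ => fun j : {j : ℕ // (j : ℕ∞) ≤ m} => UniformFun.ofFun (iteratedDeriv j.1 τ.1))
    inferInstance

/-- Partial captivity of `f₀(x,s) = (kx mod 1, s + τ₀(x)/(2π) mod 1)` (linear base), with the
canonical choice `Z = S¹ × [-R_κ,R_κ]`, `κ = (λ+1)/2`, `λ = (k+1)/2`,
`R_κ = sup|τ₀'|/(λ-κ) = 4 sup|τ₀'|/(k-1)`. -/
def PartCaptLin (k : ℕ) (τ₀ : ℝ → ℝ) : Prop :=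
  PartiallyCaptive k (fun x => (k : ℝ) * x) τ₀ ((⨆ x : ℝ, |deriv τ₀ x|) * 4 / ((k : ℝ) - 1))

/-!
Along the branch `α`, the canonical maps are the lifted dynamics `F̃^{(n)}(ω)` started at
`(y + ᾱ, η)`, where `ᾱ = ∑ αᵢ kⁱ` runs bijectively over `{0, …, kⁿ - 1}`. The graph of `S_ε` is
invariant under `F̃`, and `F̃` multiplies the vertical distance to it by `E'`, so the endpoint
`η_α` of the branch satisfies `dG^{(n)}/dy · (η_α - S_ε(ω, ·)) = η - S_ε(θⁿω, y + ᾱ)`.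
As `|S_ε| ≤ C₁` and `0 < dG^{(n)}/dy ≤ 1`, the condition `|η_α| ≤ R_κ` is squeezed between the
conditions defining `Ã_{R_κ - C₁}` and `Ã_{R_κ + C₁}`. The fibrewise hypotheses hold along the
whole two-sided orbit of almost every `ω`.
-/

open Function Set

lemma periodic_deriv_of_add_const {g : ℝ → ℝ} {c d : ℝ} (h : ∀ x, g (x + c) = g x + d) :
    Periodic (deriv g) c := fun x => by
  rw [← deriv_comp_add_const, funext h, deriv_add_const]

structure IsExpandingLift (k : ℕ) (lam : ℝ) (f : ℝ → ℝ) : Prop where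
  one_lt : 1 < lam
  map_add_one : ∀ x, f (x + 1) = f x + k
  le_deriv : ∀ x, lam ≤ deriv f x

namespace IsExpandingLift

variable {k : ℕ} {lam : ℝ} {f : ℝ → ℝ}

lemma deriv_pos (hf : IsExpandingLift k lam f) (x : ℝ) : 0 < deriv f x :=
  zero_lt_one.trans (hf.one_lt.trans_le (hf.le_deriv x))

-- `deriv f x = 0` where `f` is not differentiable, so the lower bound on `deriv f` forces it.
lemma differentiable (hf : IsExpandingLift k lam f) : Differentiable ℝ f :=
  fun x => differentiableAt_of_deriv_ne_zero (hf.deriv_pos x).ne'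

lemma strictMono (hf : IsExpandingLift k lam f) : StrictMono f :=
  strictMono_of_deriv_pos hf.deriv_pos

lemma surjective (hf : IsExpandingLift k lam f) : Surjective f := by
  have hlam : 0 < lam := zero_lt_one.trans hf.one_lt
  have hgrowth := mul_sub_le_image_sub_of_le_deriv hf.differentiable hf.le_deriv
  refine hf.differentiable.continuous.surjective ?_ ?_
  · refine tendsto_atTop_mono' _ ?_
      (tendsto_atTop_add_const_right _ (f 0) (tendsto_id.const_mul_atTop hlam))
    filter_upwards [eventually_ge_atTop 0] with x hx
    have := hgrowth hx
    simp only [id, sub_zero] at this ⊢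
    linarith
  · refine tendsto_atBot_mono' _ ?_
      (tendsto_atBot_add_const_right _ (f 0) (tendsto_id.const_mul_atBot hlam))
    filter_upwards [eventually_le_atBot 0] with x hx
    have := hgrowth hx
    simp only [id, zero_sub] at this ⊢
    linarith

lemma apply_invFun (hf : IsExpandingLift k lam f) (y : ℝ) : f (invFun f y) = y :=
  invFun_eq (hf.surjective y)

lemma invFun_apply (hf : IsExpandingLift k lam f) (x : ℝ) : invFun f (f x) = x :=
  leftInverse_invFun hf.strictMono.injective x

lemma continuous_invFun (hf : IsExpandingLift k lam f) : Continuous (invFun f) := by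
  refine Monotone.continuous_of_surjective (fun a b hab => ?_) fun x => ⟨f x, hf.invFun_apply x⟩
  rw [← hf.strictMono.le_iff_le, hf.apply_invFun, hf.apply_invFun]
  exact hab

lemma hasDerivAt_invFun (hf : IsExpandingLift k lam f) (y : ℝ) :
    HasDerivAt (invFun f) (deriv f (invFun f y))⁻¹ y :=
  .of_local_left_inverse hf.continuous_invFun.continuousAt
    (hf.differentiable _).hasDerivAt (hf.deriv_pos _).ne' (.of_forall hf.apply_invFun)

lemma map_add_nat (hf : IsExpandingLift k lam f) (x : ℝ) (m : ℕ) : f (x + m) = f x + k * m := by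
  induction m with
  | zero => simp
  | succ m ih =>
    rw [Nat.cast_succ, ← add_assoc, hf.map_add_one, ih]
    ring

lemma invFun_add_mul_nat (hf : IsExpandingLift k lam f) (y : ℝ) (m : ℕ) :
    invFun f (y + k * m) = invFun f y + m :=
  hf.strictMono.injective <| by rw [hf.map_add_nat, hf.apply_invFun, hf.apply_invFun]

lemma periodic_deriv (hf : IsExpandingLift k lam f) : Periodic (deriv f) 1 :=
  periodic_deriv_of_add_const hf.map_add_one

lemma liftF_add_mul_nat (hf : IsExpandingLift k lam f) {g : ℝ → ℝ} (hg : Periodic g 1)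
    (p : ℝ × ℝ) (m : ℕ) : liftF f g (p + ((k : ℝ) * m, 0)) = liftF f g p + ((m : ℝ), 0) := by
  have hg' : Periodic (deriv g) 1 := periodic_deriv_of_add_const (d := 0) (by simpa using hg)
  have hf_m : deriv f (invFun f p.1 + m) = deriv f (invFun f p.1) := by
    simpa using hf.periodic_deriv.nat_mul m (invFun f p.1)
  have hg_m : deriv g (invFun f p.1 + m) = deriv g (invFun f p.1) := by
    simpa using hg'.nat_mul m (invFun f p.1)
  simp only [liftF, Prod.fst_add, Prod.snd_add, add_zero, hf.invFun_add_mul_nat, hf_m, hg_m,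
    Prod.mk_add_mk]

end IsExpandingLift

lemma summable_mul_inv_pow_succ {lam : ℝ} (hlam : 1 < lam) (C : ℝ) :
    Summable fun j : ℕ => C * lam⁻¹ ^ (j + 1) :=
  ((summable_nat_add_iff 1).2 (summable_geometric_of_lt_one (inv_nonneg.2 (by linarith))
    (inv_lt_one_of_one_lt₀ hlam))).mul_left C

section Cocycle

variable {Ω : Type*} {θ θinv : Ω → Ω} {E τ : Ω → ℝ → ℝ} {k : ℕ} {lam C : ℝ} {O : Set Ω}

structure ExpandingCocycleOn (θ θinv : Ω → Ω) (E τ : Ω → ℝ → ℝ) (k : ℕ) (lam C : ℝ)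
    (O : Set Ω) : Prop where
  leftInverse : LeftInverse θinv θ
  rightInverse : RightInverse θinv θ
  mapsTo : MapsTo θ O O
  mapsTo_inv : MapsTo θinv O O
  expandingLift : ∀ σ ∈ O, IsExpandingLift k lam (E σ)
  periodic : ∀ σ ∈ O, Periodic (τ σ) 1
  abs_deriv_le : ∀ σ ∈ O, ∀ x, |deriv (τ σ) x| ≤ C

lemma iterG_succ' (n : ℕ) (σ : Ω) (x : ℝ) :
    iterG θ E (n + 1) σ x = iterG θ E n σ (invFun (E (θ^[n] σ)) x) := by
  induction n generalizing σ with
  | zero => rfl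
  | succ n ih => exact congrArg (invFun (E σ)) (ih (θ σ))

def stableTerm (θ θinv : Ω → Ω) (E τ : Ω → ℝ → ℝ) (ω : Ω) (x : ℝ) (j : ℕ) : ℝ :=
  deriv (τ (θinv^[j + 1] ω)) (iterG θ E (j + 1) (θinv^[j + 1] ω) x)
    * deriv (iterG θ E (j + 1) (θinv^[j + 1] ω)) x

lemma stableS_eq_neg_tsum (ω : Ω) (x : ℝ) :
    stableS θ θinv E τ ω x = -∑' j, stableTerm θ θinv E τ ω x j :=
  rfl

lemma iterLiftF_fst (n : ℕ) (σ : Ω) (p : ℝ × ℝ) :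
    (iterLiftF θ E τ n σ p).1 = iterG θ E n σ p.1 := by
  induction n generalizing σ with
  | zero => rfl
  | succ n ih => exact congrArg (invFun (E σ)) (ih (θ σ))

namespace ExpandingCocycleOn

lemma differentiable_iterG (h : ExpandingCocycleOn θ θinv E τ k lam C O) (n : ℕ)
    {σ : Ω} (hσ : σ ∈ O) :
    Differentiable ℝ (iterG θ E n σ) := by
  induction n generalizing σ with
  | zero => exact differentiable_id
  | succ n ih =>
    exact fun x => ((h.expandingLift σ hσ).hasDerivAt_invFun _).differentiableAt.comp x
      (ih (h.mapsTo hσ) x)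

lemma deriv_iterG_succ (h : ExpandingCocycleOn θ θinv E τ k lam C O) (n : ℕ)
    {σ : Ω} (hσ : σ ∈ O) (x : ℝ) :
    deriv (iterG θ E (n + 1) σ) x
      = deriv (iterG θ E n (θ σ)) x / deriv (E σ) (iterG θ E (n + 1) σ x) := by
  rw [div_eq_inv_mul]
  exact (((h.expandingLift σ hσ).hasDerivAt_invFun _).comp x
    (h.differentiable_iterG n (h.mapsTo hσ) x).hasDerivAt).deriv

lemma deriv_iterG_succ' (h : ExpandingCocycleOn θ θinv E τ k lam C O) (n : ℕ)
    {σ : Ω} (hσ : σ ∈ O) (x : ℝ) :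
    deriv (iterG θ E (n + 1) σ) x
      = deriv (iterG θ E n σ) (invFun (E (θ^[n] σ)) x)
        / deriv (E (θ^[n] σ)) (invFun (E (θ^[n] σ)) x) := by
  rw [funext (iterG_succ' n σ), div_eq_mul_inv]
  exact ((h.differentiable_iterG n hσ _).hasDerivAt.comp x
    ((h.expandingLift _ (h.mapsTo.iterate n hσ)).hasDerivAt_invFun x)).deriv

lemma deriv_iterG_pos (h : ExpandingCocycleOn θ θinv E τ k lam C O) (n : ℕ)
    {σ : Ω} (hσ : σ ∈ O) (x : ℝ) :
    0 < deriv (iterG θ E n σ) x := by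
  induction n generalizing σ with
  | zero => simp [iterG]
  | succ n ih =>
    rw [h.deriv_iterG_succ n hσ]
    exact div_pos (ih (h.mapsTo hσ)) ((h.expandingLift σ hσ).deriv_pos _)

lemma deriv_iterG_le (h : ExpandingCocycleOn θ θinv E τ k lam C O) (n : ℕ)
    {σ : Ω} (hσ : σ ∈ O) (x : ℝ) :
    deriv (iterG θ E n σ) x ≤ lam⁻¹ ^ n := by
  induction n generalizing σ with
  | zero => simp [iterG]
  | succ n ih =>
    have hf := h.expandingLift σ hσ
    rw [h.deriv_iterG_succ n hσ, div_eq_mul_inv, pow_succ]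
    exact mul_le_mul (ih (h.mapsTo hσ))
      (inv_anti₀ (zero_lt_one.trans hf.one_lt) (hf.le_deriv _))
      (inv_nonneg.2 (hf.deriv_pos _).le) (pow_nonneg (inv_nonneg.2 (by linarith [hf.one_lt])) _)

lemma abs_stableTerm_le (h : ExpandingCocycleOn θ θinv E τ k lam C O) {σ : Ω} (hσ : σ ∈ O)
    (x : ℝ) (j : ℕ) : |stableTerm θ θinv E τ σ x j| ≤ C * lam⁻¹ ^ (j + 1) := by
  have hρ := h.mapsTo_inv.iterate (j + 1) hσ
  have hD := h.deriv_iterG_pos (j + 1) hρ x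
  rw [stableTerm, abs_mul, abs_of_pos hD]
  exact mul_le_mul (h.abs_deriv_le _ hρ _) (h.deriv_iterG_le (j + 1) hρ x) hD.le
    ((abs_nonneg _).trans (h.abs_deriv_le _ hρ 0))

lemma summable_stableTerm (h : ExpandingCocycleOn θ θinv E τ k lam C O) {σ : Ω} (hσ : σ ∈ O)
    (x : ℝ) : Summable (stableTerm θ θinv E τ σ x) :=
  .of_norm_bounded (summable_mul_inv_pow_succ (h.expandingLift σ hσ).one_lt C)
    (h.abs_stableTerm_le hσ x)

lemma abs_stableS_le (h : ExpandingCocycleOn θ θinv E τ k lam C O) {σ : Ω} (hσ : σ ∈ O)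
    (x : ℝ) : |stableS θ θinv E τ σ x| ≤ C * ∑' j : ℕ, lam⁻¹ ^ (j + 1) := by
  rw [stableS_eq_neg_tsum, abs_neg, ← tsum_mul_left]
  exact tsum_of_norm_bounded (f := stableTerm θ θinv E τ σ x)
    (summable_mul_inv_pow_succ (h.expandingLift σ hσ).one_lt C).hasSum (h.abs_stableTerm_le hσ x)

/-- The graph of `stableS` is invariant under the lifted dynamics `liftF`. -/
lemma stableS_invFun (h : ExpandingCocycleOn θ θinv E τ k lam C O) {σ : Ω} (hσ : σ ∈ O)
    (w : ℝ) :
    stableS θ θinv E τ σ (invFun (E σ) w)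
      = deriv (E σ) (invFun (E σ) w) * stableS θ θinv E τ (θ σ) w
        + deriv (τ σ) (invFun (E σ) w) := by
  set z := invFun (E σ) w
  have hEz := ((h.expandingLift σ hσ).deriv_pos z).ne'
  have hterm_zero : stableTerm θ θinv E τ (θ σ) w 0 = deriv (τ σ) z / deriv (E σ) z := by
    have hback : θinv^[0 + 1] (θ σ) = σ := h.leftInverse σ
    rw [stableTerm, hback, h.deriv_iterG_succ 0 hσ]
    simp [iterG, z, div_eq_mul_inv]
  have hterm_succ (j : ℕ) : stableTerm θ θinv E τ (θ σ) w (j + 1)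
      = stableTerm θ θinv E τ σ z j / deriv (E σ) z := by
    have hback : θinv^[j + 1 + 1] (θ σ) = θinv^[j + 1] σ := by
      rw [iterate_succ_apply, h.leftInverse σ]
    have hfwd : θ^[j + 1] (θinv^[j + 1] σ) = σ := h.rightInverse.iterate (j + 1) σ
    rw [stableTerm, stableTerm, hback, iterG_succ' (j + 1),
      h.deriv_iterG_succ' (j + 1) (h.mapsTo_inv.iterate _ hσ), hfwd, mul_div_assoc]
  rw [stableS_eq_neg_tsum, stableS_eq_neg_tsum,
    (h.summable_stableTerm (h.mapsTo hσ) w).tsum_eq_zero_add, hterm_zero]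
  simp_rw [hterm_succ]
  rw [tsum_div_const]
  field_simp
  ring

lemma deriv_iterG_mul_iterLiftF_snd_sub (h : ExpandingCocycleOn θ θinv E τ k lam C O) (n : ℕ)
    {σ : Ω} (hσ : σ ∈ O) (x η : ℝ) :
    deriv (iterG θ E n σ) x
        * ((iterLiftF θ E τ n σ (x, η)).2 - stableS θ θinv E τ σ (iterG θ E n σ x))
      = η - stableS θ θinv E τ (θ^[n] σ) x := by
  induction n generalizing σ with
  | zero => simp [iterLiftF, iterG]
  | succ n ih =>
    set q := iterLiftF θ E τ n (θ σ) (x, η)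
    have hq : q.1 = iterG θ E n (θ σ) x := iterLiftF_fst n (θ σ) (x, η)
    have hz : iterG θ E (n + 1) σ x = invFun (E σ) q.1 := by rw [hq]; rfl
    have hEz := ((h.expandingLift σ hσ).deriv_pos (invFun (E σ) q.1)).ne'
    have hlift : iterLiftF θ E τ (n + 1) σ (x, η) = liftF (E σ) (τ σ) q := rfl
    rw [iterate_succ_apply, ← ih (h.mapsTo hσ), h.deriv_iterG_succ n hσ, hz, hlift, liftF,
      h.stableS_invFun hσ, ← hq]
    field_simp
    ring

lemma iterLiftF_add_pow_mul_nat (h : ExpandingCocycleOn θ θinv E τ k lam C O) (n : ℕ)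
    {σ : Ω} (hσ : σ ∈ O) (p : ℝ × ℝ) (m : ℕ) :
    iterLiftF θ E τ n σ (p + ((k : ℝ) ^ n * m, 0)) = iterLiftF θ E τ n σ p + ((m : ℝ), 0) := by
  induction n generalizing σ m with
  | zero => simp [iterLiftF]
  | succ n ih =>
    have hkm : (k : ℝ) ^ (n + 1) * m = (k : ℝ) ^ n * ((k * m : ℕ) : ℝ) := by push_cast; ring
    show liftF (E σ) (τ σ) (iterLiftF θ E τ n (θ σ) _) = liftF (E σ) (τ σ) _ + _
    rw [hkm, ih (h.mapsTo hσ), Nat.cast_mul,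
      (h.expandingLift σ hσ).liftF_add_mul_nat (h.periodic σ hσ)]

lemma canTraj_eq_iterLiftF (h : ExpandingCocycleOn θ θinv E τ k lam C O) (n : ℕ)
    {σ : Ω} (hσ : σ ∈ O) (α : Fin n → ℕ) (p : ℝ × ℝ) :
    canTraj θ E τ n α σ p
      = iterLiftF θ E τ n σ (p + (∑ i, (α i : ℝ) * (k : ℝ) ^ (i : ℕ), 0)) := by
  induction n generalizing σ with
  | zero => simp [canTraj, iterLiftF]
  | succ n ih =>
    have hp : p + (∑ i : Fin (n + 1), (α i : ℝ) * (k : ℝ) ^ (i : ℕ), 0)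
        = p + (∑ i : Fin n, (α i.castSucc : ℝ) * (k : ℝ) ^ (i : ℕ), 0)
          + ((k : ℝ) ^ n * (α (Fin.last n) : ℕ), 0) := by
      rw [Fin.sum_univ_castSucc]
      ext <;> simp [add_assoc, mul_comm]
    show canMap (E σ) (τ σ) _ (canTraj θ E τ n _ (θ σ) p)
      = liftF (E σ) (τ σ) (iterLiftF θ E τ n (θ σ) _)
    rw [hp, h.iterLiftF_add_pow_mul_nat n (h.mapsTo hσ), ← ih (h.mapsTo hσ)]
    simp [canMap, liftF]

lemma deriv_iterG_le_one (h : ExpandingCocycleOn θ θinv E τ k lam C O) (n : ℕ) {σ : Ω}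
    (hσ : σ ∈ O) (x : ℝ) : deriv (iterG θ E n σ) x ≤ 1 := by
  have hlam := (h.expandingLift σ hσ).one_lt
  exact (h.deriv_iterG_le n hσ x).trans
    (pow_le_one₀ (inv_nonneg.2 (by linarith)) (inv_le_one_of_one_le₀ hlam.le))

lemma deriv_iterG_mul_canTraj_snd_sub (h : ExpandingCocycleOn θ θinv E τ k lam C O) (n : ℕ)
    {ω : Ω} (hω : ω ∈ O) (p : ℝ × ℝ) (α : Fin n → Fin k) :
    deriv (iterG θ E n ω) (p.1 + (finFunctionFinEquiv α : ℕ))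
        * ((canTraj θ E τ n (fun i => (α i : ℕ)) ω p).2
          - stableS θ θinv E τ ω (iterG θ E n ω (p.1 + (finFunctionFinEquiv α : ℕ))))
      = p.2 - stableS θ θinv E τ (θ^[n] ω) (p.1 + (finFunctionFinEquiv α : ℕ)) := by
  have hp : p + (∑ i, ((α i : ℕ) : ℝ) * (k : ℝ) ^ (i : ℕ), 0)
      = (p.1 + (finFunctionFinEquiv α : ℕ), p.2) := by
    ext <;> simp
  rw [h.canTraj_eq_iterLiftF n hω, hp]
  exact h.deriv_iterG_mul_iterLiftF_snd_sub n hω _ _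

lemma abs_sub_stableS_le_of_abs_canTraj_le (h : ExpandingCocycleOn θ θinv E τ k lam C O)
    (n : ℕ) {ω : Ω} (hω : ω ∈ O) (p : ℝ × ℝ) (α : Fin n → Fin k) {R : ℝ}
    (hR : |(canTraj θ E τ n (fun i => (α i : ℕ)) ω p).2| ≤ R) :
    |p.2 - stableS θ θinv E τ (θ^[n] ω) (p.1 + (finFunctionFinEquiv α : ℕ))|
      ≤ (R + C * ∑' j : ℕ, lam⁻¹ ^ (j + 1))
        * deriv (iterG θ E n ω) (p.1 + (finFunctionFinEquiv α : ℕ)) := by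
  have hD := h.deriv_iterG_pos n hω (p.1 + (finFunctionFinEquiv α : ℕ))
  rw [← h.deriv_iterG_mul_canTraj_snd_sub n hω, abs_mul, abs_of_pos hD, mul_comm]
  exact mul_le_mul_of_nonneg_right ((abs_sub _ _).trans (add_le_add hR (h.abs_stableS_le hω _)))
    hD.le

lemma abs_canTraj_le_of_abs_sub_stableS_le (h : ExpandingCocycleOn θ θinv E τ k lam C O)
    (n : ℕ) {ω : Ω} (hω : ω ∈ O) (p : ℝ × ℝ) (α : Fin n → Fin k) {R : ℝ}
    (hR : |p.2 - stableS θ θinv E τ (θ^[n] ω) (p.1 + (finFunctionFinEquiv α : ℕ))|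
      ≤ (R - C * ∑' j : ℕ, lam⁻¹ ^ (j + 1))
        * deriv (iterG θ E n ω) (p.1 + (finFunctionFinEquiv α : ℕ))) :
    |(canTraj θ E τ n (fun i => (α i : ℕ)) ω p).2| ≤ R := by
  have hD := h.deriv_iterG_pos n hω (p.1 + (finFunctionFinEquiv α : ℕ))
  rw [← h.deriv_iterG_mul_canTraj_snd_sub n hω, abs_mul, abs_of_pos hD, mul_comm] at hR
  have hdist := le_of_mul_le_mul_right hR hD
  linarith [abs_sub_abs_le_abs_sub (canTraj θ E τ n (fun i => (α i : ℕ)) ω p).2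
    (stableS θ θinv E τ ω (iterG θ E n ω (p.1 + (finFunctionFinEquiv α : ℕ)))),
    h.abs_stableS_le hω (iterG θ E n ω (p.1 + (finFunctionFinEquiv α : ℕ)))]

lemma abs_snd_le_of_abs_sub_stableS_le (h : ExpandingCocycleOn θ θinv E τ k lam C O)
    (n : ℕ) {ω : Ω} (hω : ω ∈ O) {p : ℝ × ℝ} {x R : ℝ}
    (hR : |p.2 - stableS θ θinv E τ (θ^[n] ω) x|
      ≤ (R - C * ∑' j : ℕ, lam⁻¹ ^ (j + 1)) * deriv (iterG θ E n ω) x) :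
    |p.2| ≤ R := by
  have hD := h.deriv_iterG_pos n hω x
  have hRC : 0 ≤ R - C * ∑' j : ℕ, lam⁻¹ ^ (j + 1) :=
    le_of_mul_le_mul_right (by linarith [abs_nonneg (p.2 - stableS θ θinv E τ (θ^[n] ω) x)]) hD
  linarith [abs_sub_abs_le_abs_sub p.2 (stableS θ θinv E τ (θ^[n] ω) x),
    h.abs_stableS_le (h.mapsTo.iterate n hω) x,
    mul_le_of_le_one_right hRC (h.deriv_iterG_le_one n hω x)]

lemma trajCount_le_tilACard (h : ExpandingCocycleOn θ θinv E τ k lam C O) (n : ℕ) {ω : Ω}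
    (hω : ω ∈ O) (R : ℝ) (p : ℝ × ℝ) :
    trajCount k θ E τ R n ω p
      ≤ tilACard k θ θinv E τ (R + C * ∑' j : ℕ, lam⁻¹ ^ (j + 1)) n ω p :=
  Nat.card_le_card_of_injective
    (fun α => ⟨finFunctionFinEquiv α.1,
      h.abs_sub_stableS_le_of_abs_canTraj_le n hω p α.1 α.2⟩)
    fun _ _ hαβ => Subtype.ext (finFunctionFinEquiv.injective (congrArg Subtype.val hαβ))

lemma tilACard_le_trajCount (h : ExpandingCocycleOn θ θinv E τ k lam C O) (n : ℕ) {ω : Ω}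
    (hω : ω ∈ O) (R : ℝ) (p : ℝ × ℝ) :
    tilACard k θ θinv E τ (R - C * ∑' j : ℕ, lam⁻¹ ^ (j + 1)) n ω p
      ≤ trajCount k θ E τ R n ω p :=
  Nat.card_le_card_of_injective
    (fun a => ⟨finFunctionFinEquiv.symm a.1,
      h.abs_canTraj_le_of_abs_sub_stableS_le n hω p _ (by rw [Equiv.apply_symm_apply]; exact a.2)⟩)
    fun _ _ hab => Subtype.ext (finFunctionFinEquiv.symm.injective (congrArg Subtype.val hab))

lemma tilN_le_Ncount (h : ExpandingCocycleOn θ θinv E τ k lam C O) (n : ℕ) {ω : Ω}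
    (hω : ω ∈ O) (R : ℝ) :
    tilN k θ θinv E τ (R - C * ∑' j : ℕ, lam⁻¹ ^ (j + 1)) n ω ≤ Ncount k θ E τ R n ω := by
  have hbdd : BddAbove {c | ∃ p : ℝ × ℝ, |p.2| ≤ R ∧ trajCount k θ E τ R n ω p = c} :=
    ⟨k ^ n, by
      rintro _ ⟨p, -, rfl⟩
      exact (Finite.card_subtype_le _).trans_eq (by simp)⟩
  refine csSup_le' ?_
  rintro _ ⟨p, rfl⟩
  obtain hzero | ⟨⟨a, ha⟩⟩ :=
    isEmpty_or_nonempty {a : Fin (k ^ n) // |p.2 - stableS θ θinv E τ (θ^[n] ω) (p.1 + a)|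
      ≤ (R - C * ∑' j : ℕ, lam⁻¹ ^ (j + 1)) * deriv (iterG θ E n ω) (p.1 + a)}
  · exact (Nat.card_eq_zero.2 (.inl hzero)).trans_le (Nat.zero_le _)
  · exact (h.tilACard_le_trajCount n hω R p).trans
      (le_csSup hbdd ⟨p, h.abs_snd_le_of_abs_sub_stableS_le n hω ha, rfl⟩)

lemma Ncount_le_tilN (h : ExpandingCocycleOn θ θinv E τ k lam C O) (n : ℕ) {ω : Ω}
    (hω : ω ∈ O) (R : ℝ) :
    Ncount k θ E τ R n ω ≤ tilN k θ θinv E τ (R + C * ∑' j : ℕ, lam⁻¹ ^ (j + 1)) n ω := by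
  have hbdd : BddAbove {c | ∃ p : ℝ × ℝ,
      tilACard k θ θinv E τ (R + C * ∑' j : ℕ, lam⁻¹ ^ (j + 1)) n ω p = c} :=
    ⟨k ^ n, by
      rintro _ ⟨p, rfl⟩
      exact (Finite.card_subtype_le _).trans_eq (by simp)⟩
  refine csSup_le' ?_
  rintro _ ⟨p, -, rfl⟩
  exact (h.trajCount_le_tilACard n hω R p).trans (le_csSup hbdd ⟨p, rfl⟩)

end ExpandingCocycleOn

end Cocycle

lemma exists_invariant_subset_of_ae {Ω : Type*} [MeasurableSpace Ω] {μ : Measure Ω}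
    {θ θinv : Ω → Ω} (hθ : MeasurePreserving θ μ μ) (hθinv : MeasurePreserving θinv μ μ)
    (hright : RightInverse θinv θ) {Q : Ω → Prop} (hQ : ∀ᵐ ω ∂μ, Q ω) :
    ∃ O : Set Ω, (∀ᵐ ω ∂μ, ω ∈ O) ∧ MapsTo θ O O ∧ MapsTo θinv O O ∧ ∀ ω ∈ O, Q ω := by
  refine ⟨{ω | ∀ m j : ℕ, Q (θinv^[j] (θ^[m] ω))}, ?_, ?_, ?_, fun ω hω => hω 0 0⟩
  · simp only [Set.mem_ofPred_eq, ae_all_iff]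
    exact fun m j => ((hθinv.iterate j).comp (hθ.iterate m)).quasiMeasurePreserving.ae hQ
  · intro ω hω m j
    rw [← iterate_succ_apply]
    exact hω (m + 1) j
  · intro ω hω m j
    cases m with
    | zero => rw [iterate_zero_apply, ← iterate_succ_apply]; exact hω 0 (j + 1)
    | succ m => rw [iterate_succ_apply, hright ω]; exact hω m j

theorem stmt8_general
    {Ω : Type*} [MeasurableSpace Ω]
    (k : ℕ)
    (P : Measure Ω)
    (θ : Ω → Ω) (hθ : Ergodic θ P)
    (E τ : ℝ → Ω → ℝ → ℝ)
    (lam0 : ℝ) (hlam0 : 1 < lam0)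
    (hElift : ∀ ε ω x, E ε ω (x + 1) = E ε ω x + k)
    (hτper : ∀ ε ω, Function.Periodic (τ ε ω) 1)
    (ε₀ : ℝ)
    (hexp : ∀ ε, 0 ≤ ε → ε < ε₀ → ∀ᵐ ω ∂P, ∀ x, (lam0 + 1) / 2 ≤ deriv (E ε ω) x)
    (θinv : Ω → Ω) (hθinv₁ : Function.LeftInverse θinv θ)
    (hθinv₂ : Function.RightInverse θinv θ) (hθinvmeas : Measurable θinv)
    (Cτ : ℝ)
    (hCτ : ∀ ε, 0 ≤ ε → ε < ε₀ → ∀ᵐ ω ∂P, ∀ x, |deriv (τ ε ω) x| ≤ Cτ)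
    (Rκ : ℝ)
 :
    ∀ ε, 0 ≤ ε → ε < ε₀ → ∀ n : ℕ, 1 ≤ n → ∀ᵐ ω ∂P,
      tilN k θ θinv (E ε) (τ ε)
          (Rκ - Cτ * ∑' j : ℕ, (1 / ((lam0 + 1) / 2)) ^ (j + 1)) n ω
        ≤ Ncount k θ (E ε) (τ ε) Rκ n ω ∧
      Ncount k θ (E ε) (τ ε) Rκ n ω
        ≤ tilN k θ θinv (E ε) (τ ε)
            (Rκ + Cτ * ∑' j : ℕ, (1 / ((lam0 + 1) / 2)) ^ (j + 1)) n ω := by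
  intro ε hε hεlt n _
  have hθinvP : MeasurePreserving θinv P P :=
    MeasurePreserving.symm ⟨⟨θ, θinv, hθinv₁, hθinv₂⟩, hθ.measurable, hθinvmeas⟩
      hθ.toMeasurePreserving
  obtain ⟨O, hO, hθO, hθinvO, hgood⟩ := exists_invariant_subset_of_ae hθ.toMeasurePreserving
    hθinvP hθinv₂ ((hexp ε hε hεlt).and (hCτ ε hε hεlt))
  have hcocycle : ExpandingCocycleOn θ θinv (E ε) (τ ε) k ((lam0 + 1) / 2) Cτ O :=
    { leftInverse := hθinv₁
      rightInverse := hθinv₂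
      mapsTo := hθO
      mapsTo_inv := hθinvO
      expandingLift := fun σ hσ => ⟨by linarith, hElift ε σ, (hgood σ hσ).1⟩
      periodic := fun σ _ => hτper ε σ
      abs_deriv_le := fun σ hσ => (hgood σ hσ).2 }
  filter_upwards [hO] with ω hω
  simp only [one_div]
  exact ⟨hcocycle.tilN_le_Ncount n hω Rκ, hcocycle.Ncount_le_tilN n hω Rκ⟩

theorem stmt8
    {Ω : Type*} [MeasurableSpace Ω]
    (k : ℕ) (hk : 2 ≤ k)
    (P : Measure Ω) [IsProbabilityMeasure P]
    (θ : Ω → Ω) (hθ : Ergodic θ P) (hθbij : Function.Bijective θ)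
    (E τ : ℝ → Ω → ℝ → ℝ) (E₀ τ₀ : ℝ → ℝ)
    (hE0 : ∀ ω, E 0 ω = E₀) (hτ0 : ∀ ω, τ 0 ω = τ₀)
    (hE₀smooth : ContDiff ℝ (⊤ : ℕ∞) E₀) (hE₀lift : ∀ x, E₀ (x + 1) = E₀ x + k)
    (lam0 : ℝ) (hlam0 : 1 < lam0) (hE₀exp : ∀ x, lam0 ≤ deriv E₀ x)
    (hτ₀smooth : ContDiff ℝ (⊤ : ℕ∞) τ₀) (hτ₀per : Function.Periodic τ₀ 1)
    (hEsmooth : ∀ ε ω, 0 ≤ ε → ContDiff ℝ (⊤ : ℕ∞) (E ε ω))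
    (hElift : ∀ ε ω x, E ε ω (x + 1) = E ε ω x + k)
    (hτsmooth : ∀ ε ω, 0 ≤ ε → ContDiff ℝ (⊤ : ℕ∞) (τ ε ω))
    (hτper : ∀ ε ω, Function.Periodic (τ ε ω) 1)
    (hmeasE : ∀ ε x, Measurable fun ω => E ε ω x)
    (hmeasτ : ∀ ε x, Measurable fun ω => τ ε ω x)
    (ε₀ : ℝ) (hε₀ : 0 < ε₀)
    (hexp : ∀ ε, 0 ≤ ε → ε < ε₀ → ∀ᵐ ω ∂P, ∀ x, (lam0 + 1) / 2 ≤ deriv (E ε ω) x)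
    (hconv : ∀ j : ℕ, ∀ δ : ℝ, 0 < δ → ∃ ε' > 0, ∀ ε, 0 ≤ ε → ε < ε' → ∀ᵐ ω ∂P, ∀ x,
      |iteratedDeriv j (E ε ω) x - iteratedDeriv j E₀ x| < δ ∧
      |iteratedDeriv j (τ ε ω) x - iteratedDeriv j τ₀ x| < δ)
    (θinv : Ω → Ω) (hθinv₁ : Function.LeftInverse θinv θ)
    (hθinv₂ : Function.RightInverse θinv θ) (hθinvmeas : Measurable θinv)
    (Cτ : ℝ) (hCτpos : 0 < Cτ)
    (hCτ : ∀ ε, 0 ≤ ε → ε < ε₀ → ∀ᵐ ω ∂P, ∀ x, |deriv (τ ε ω) x| ≤ Cτ)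
    (κ : ℝ) (hκ : κ = ((lam0 + 1) / 2 + 1) / 2)
    (Rκ : ℝ) (hRκ : Cτ / ((lam0 + 1) / 2 - κ) ≤ Rκ)
 :
    ∀ ε, 0 ≤ ε → ε < ε₀ → ∀ n : ℕ, 1 ≤ n → ∀ᵐ ω ∂P,
      tilN k θ θinv (E ε) (τ ε)
          (Rκ - Cτ * ∑' j : ℕ, (1 / ((lam0 + 1) / 2)) ^ (j + 1)) n ω
        ≤ Ncount k θ (E ε) (τ ε) Rκ n ω ∧
      Ncount k θ (E ε) (τ ε) Rκ n ω
        ≤ tilN k θ θinv (E ε) (τ ε)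
            (Rκ + Cτ * ∑' j : ℕ, (1 / ((lam0 + 1) / 2)) ^ (j + 1)) n ω :=
  stmt8_general k P θ hθ E τ lam0 hlam0 hElift hτper ε₀ hexp θinv hθinv₁ hθinv₂ hθinvmeas Cτ hCτ Rκ

end RPE
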